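/- Every finite potential game admits at least one pure Nash equilibrium. -/

import Mathlib

theorem utility_update_le_of_forall_potential_le {ι : Type*} [DecidableEq ι] {A : ι → Type*}
    (U : ι → (∀ j, A j) → ℝ) (φ : (∀ j, A j) → ℝ)
    (hpot : ∀ (i : ι) (a : ∀ j, A j) (x y : A i),
      U i (Function.update a i x) - U i (Function.update a i y)
        = φ (Function.update a i x) - φ (Function.update a i y))
    {a : ∀ j, A j} (hmax : ∀ b, φ b ≤ φ a) (i : ι) (x : A i) :
    U i (Function.update a i x) ≤ U i a := by
  have hgain := hpot i a x (a i)
  rw [Function.update_eq_self] at hgain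
  linarith [hmax (Function.update a i x)]

theorem finite_potential_game_has_pure_nash_general
    {ι : Type*} [Fintype ι] [DecidableEq ι]
    {A : ι → Type*} [∀ i, Fintype (A i)] [∀ i, Nonempty (A i)]
    (U : ∀ i, (∀ j, A j) → ℝ) (φ : (∀ j, A j) → ℝ)
    (hpot : ∀ (i : ι) (a : ∀ j, A j) (x y : A i),
      U i (Function.update a i x) - U i (Function.update a i y)
        = φ (Function.update a i x) - φ (Function.update a i y)) :
    ∃ astar : ∀ j, A j, ∀ (i : ι) (x : A i),
      U i (Function.update astar i x) ≤ U i astar := by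
  obtain ⟨astar, hmax⟩ := Finite.exists_max φ
  exact ⟨astar, utility_update_le_of_forall_potential_le U φ hpot hmax⟩

/-- Every finite potential game admits at least one pure Nash equilibrium. -/
theorem finite_potential_game_has_pure_nash
    {ι : Type*} [Fintype ι] [Nonempty ι] [DecidableEq ι]
    {A : ι → Type*} [∀ i, Fintype (A i)] [∀ i, Nonempty (A i)]
    (U : ∀ i, (∀ j, A j) → ℝ) (φ : (∀ j, A j) → ℝ)
    (hpot : ∀ (i : ι) (a : ∀ j, A j) (x y : A i),
      U i (Function.update a i x) - U i (Function.update a i y)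
        = φ (Function.update a i x) - φ (Function.update a i y)) :
    ∃ astar : ∀ j, A j, ∀ (i : ι) (x : A i),
      U i (Function.update astar i x) ≤ U i astar :=
  finite_potential_game_has_pure_nash_general U φ hpot
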